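/- Let 𝒜 : ℂ^{n1×n2} → ℂ^m be a linear operator, X0 ∈ ℂ^{n1×n2}, θ > 0, and let Z ∈ D(X0) \ {0} be such that 𝒜(Z) ≠ 0, ‖𝒜(Z)‖ ≤ θ·‖Z‖_F, and ‖X0 + tZ‖_* ≤ ‖X0‖_* for all 0 < t ≤ 1. Set τ0 := ‖𝒜(Z)‖/2. Then for every 0 < τ ≤ τ0, setting t := τ/τ0, e := (t/2)·𝒜(Z), y := 𝒜(X0) + e, and X̃ := X0 + tZ, one has: ‖e‖ = τ, ‖𝒜(X̃) − y‖ = τ, ‖X̃‖_* ≤ ‖X0‖_*, and ‖X̃ − X0‖_F ≥ 2τ/θ. -/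

import Mathlib

open MeasureTheory ProbabilityTheory Matrix
open scoped ENNReal

noncomputable section

/-- Euclidean norm of a vector in `𝕜^n`. -/
def vecNorm {𝕜 : Type*} [RCLike 𝕜] {n : ℕ} (v : Fin n → 𝕜) : ℝ :=
  Real.sqrt (∑ i, ‖v i‖ ^ 2)

/-- Frobenius norm of a matrix. -/
def frobNorm {𝕜 : Type*} [RCLike 𝕜] {p q : ℕ} (Z : Matrix (Fin p) (Fin q) 𝕜) : ℝ :=
  Real.sqrt (∑ i, ∑ j, ‖Z i j‖ ^ 2)

/-- Frobenius inner product `⟨Z, W⟩_F = Tr (Zᴴ W)`. -/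
def frobInner {𝕜 : Type*} [RCLike 𝕜] {p q : ℕ} (Z W : Matrix (Fin p) (Fin q) 𝕜) : 𝕜 :=
  (Zᴴ * W).trace

/-- Nuclear norm of a matrix: the sum of its singular values, i.e. the sum of the
square roots of the eigenvalues of `Zᴴ * Z`. -/
def nuclearNorm {𝕜 : Type*} [RCLike 𝕜] {p q : ℕ} (Z : Matrix (Fin p) (Fin q) 𝕜) : ℝ :=
  ∑ j, Real.sqrt ((Matrix.isHermitian_conjTranspose_mul_self Z).eigenvalues j)

/-- Spectral norm of a matrix: its largest singular value. -/
def specNorm {𝕜 : Type*} [RCLike 𝕜] {p q : ℕ} (Z : Matrix (Fin p) (Fin q) 𝕜) : ℝ :=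
  ⨆ j, Real.sqrt ((Matrix.isHermitian_conjTranspose_mul_self Z).eigenvalues j)

/-- Descent cone of the nuclear norm at `X0`. -/
def descentCone {𝕜 : Type*} [RCLike 𝕜] {p q : ℕ} (X0 : Matrix (Fin p) (Fin q) 𝕜) :
    Set (Matrix (Fin p) (Fin q) 𝕜) :=
  {Z | ∃ ε : ℝ, 0 < ε ∧ nuclearNorm (X0 + ε • Z) ≤ nuclearNorm X0}

/-- Minimum conic singular value of `A` with respect to the cone `S`,
`λ_min (A, S) = inf {‖A Z‖ / ‖Z‖_F : Z ∈ S \ {0}}`. -/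
def minConicSV {𝕜 : Type*} [RCLike 𝕜] {p q m : ℕ}
    (A : Matrix (Fin p) (Fin q) 𝕜 → Fin m → 𝕜) (S : Set (Matrix (Fin p) (Fin q) 𝕜)) : ℝ :=
  sInf ((fun Z => vecNorm (A Z) / frobNorm Z) '' (S \ {0}))

/-- The standard (circularly symmetric) complex Gaussian distribution `CN(0,1)` on `ℂ`:
the law of `(g₁ + i g₂)/√2` with `g₁, g₂` independent standard real Gaussians. -/
def complexStdGaussian : Measure ℂ :=
  Measure.map (fun p : ℝ × ℝ => ((p.1 : ℂ) + (p.2 : ℂ) * Complex.I) / (Real.sqrt 2 : ℂ))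
    ((gaussianReal 0 1).prod (gaussianReal 0 1))

/-- Law of a standard complex Gaussian vector in `ℂ^n` (i.i.d. `CN(0,1)` entries). -/
def gaussianVec (n : ℕ) : Measure (Fin n → ℂ) :=
  Measure.pi fun _ => complexStdGaussian

/-- Joint law of `L` independent standard complex Gaussian vectors in `ℂ^N`. -/
def gaussianEnsemble (L N : ℕ) : Measure (Fin L → Fin N → ℂ) :=
  Measure.pi fun _ => gaussianVec N

/-- The tight-frame condition `Σ_ℓ b_ℓ b_ℓ* = Id`. -/
def IsTightFrame {K L : ℕ} (b : Fin L → Fin K → ℂ) : Prop :=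
  ∑ ℓ, Matrix.vecMulVec (b ℓ) (star (b ℓ)) = (1 : Matrix (Fin K) (Fin K) ℂ)

/-- The bilinear form `u* X v = ⟨u v*, X⟩_F`. -/
def pairF {K N : ℕ} (u : Fin K → ℂ) (X : Matrix (Fin K) (Fin N) ℂ) (v : Fin N → ℂ) : ℂ :=
  ∑ i, ∑ j, (starRingEnd ℂ) (u i) * X i j * v j

/-- Blind deconvolution measurement operator `(𝒜 X) ℓ = b_ℓ* X c_ℓ = ⟨b_ℓ c_ℓ*, X⟩_F`. -/
def bdOp {K N L : ℕ} (b : Fin L → Fin K → ℂ) (c : Fin L → Fin N → ℂ)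
    (X : Matrix (Fin K) (Fin N) ℂ) : Fin L → ℂ :=
  fun ℓ => pairF (b ℓ) X (c ℓ)

/-- Squared coherence `μ_{h0}² = (L/‖h0‖²) max_ℓ |⟨b_ℓ, h0⟩|²`. -/
def coherenceSq {K L : ℕ} (b : Fin L → Fin K → ℂ) (h0 : Fin K → ℂ) : ℝ :=
  ((L : ℝ) / vecNorm h0 ^ 2) * ⨆ ℓ, ‖∑ i, (starRingEnd ℂ) (b ℓ i) * h0 i‖ ^ 2

/-- The set `H_μ` of `μ`-incoherent vectors: `√L |⟨b_ℓ, h⟩| ≤ μ ‖h‖` for all `ℓ`. -/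
def incoherentSet {K L : ℕ} (b : Fin L → Fin K → ℂ) (μ : ℝ) : Set (Fin K → ℂ) :=
  {h | ∀ ℓ, Real.sqrt L * ‖∑ i, (starRingEnd ℂ) (b ℓ i) * h i‖ ≤ μ * vecNorm h}

/-- The rank-one matrix `h m*`. -/
def rankOne {K N : ℕ} (h : Fin K → ℂ) (m : Fin N → ℂ) : Matrix (Fin K) (Fin N) ℂ :=
  Matrix.vecMulVec h (star m)

/-- The `B1`-norm `‖Z‖_{B1} = Σ_ℓ ‖Z* b_ℓ‖`. -/
def B1norm {K N L : ℕ} (b : Fin L → Fin K → ℂ) (Z : Matrix (Fin K) (Fin N) ℂ) : ℝ :=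
  ∑ ℓ, vecNorm (Zᴴ.mulVec (b ℓ))

/-- The set `E_{μ,δ}`. -/
def Eset {K L : ℕ} (N : ℕ) (b : Fin L → Fin K → ℂ) (μ δ : ℝ) :
    Set (Matrix (Fin K) (Fin N) ℂ) :=
  {Z | ∃ (h0 : Fin K → ℂ) (m0 : Fin N → ℂ), h0 ∈ incoherentSet b μ ∧ h0 ≠ 0 ∧ m0 ≠ 0 ∧
    Z ∈ descentCone (rankOne h0 m0) ∧
    δ ≤ -(frobInner Z (rankOne h0 m0)).re / frobNorm (rankOne h0 m0) ∧ frobNorm Z = 1}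

/-- Gaussian width `ω(E) = 𝔼 [sup_{X ∈ E} Re ⟨X, G⟩_F]` for a Gaussian matrix `G`. -/
def gaussianWidth {K N : ℕ} (E : Set (Matrix (Fin K) (Fin N) ℂ)) : ℝ :=
  ∫ g, sSup ((fun X => (frobInner X (Matrix.of g)).re) '' E) ∂(gaussianEnsemble K N)

/-- Matrix completion measurement operator `(𝒜 X) i = √(n1 n2/m) X_{a_i, b_i}`. -/
def mcOp {n1 n2 m : ℕ} (s : Fin m → Fin n1 × Fin n2) (X : Matrix (Fin n1) (Fin n2) ℝ) :
    Fin m → ℝ :=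
  fun i => Real.sqrt ((n1 : ℝ) * n2 / m) * X (s i).1 (s i).2

/-- Joint law of `m` independent uniform samples from `[n1] × [n2]`. -/
def uniformSample (n1 n2 m : ℕ) : Measure (Fin m → Fin n1 × Fin n2) :=
  Measure.pi fun _ => (((n1 : ℝ≥0∞) * (n2 : ℝ≥0∞))⁻¹ • Measure.count)

/-- Coherence `μ(V) = √(n/r) max_i ‖Vᵀ e_i‖` of a matrix `V ∈ ℝ^{n × r}`. -/
def mcCoherence {n r : ℕ} (V : Matrix (Fin n) (Fin r) ℝ) : ℝ :=
  Real.sqrt ((n : ℝ) / r) * ⨆ i, Real.sqrt (∑ k, ‖V i k‖ ^ 2)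

lemma vecNorm_nonneg' {𝕜 : Type*} [RCLike 𝕜] {n : ℕ} (v : Fin n → 𝕜) : 0 ≤ vecNorm v :=
  Real.sqrt_nonneg _

lemma vecNorm_smul_real {𝕜 : Type*} [RCLike 𝕜] {n : ℕ} (r : ℝ) (v : Fin n → 𝕜) :
    vecNorm (r • v) = |r| * vecNorm v := by
  unfold vecNorm
  have : ∀ i, ‖(r • v) i‖ ^ 2 = r ^ 2 * ‖v i‖ ^ 2 := by
    intro i
    simp [Pi.smul_apply, norm_smul, mul_pow, sq_abs]
  rw [Finset.sum_congr rfl (fun i _ => this i), ← Finset.mul_sum,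
    Real.sqrt_mul (sq_nonneg r), Real.sqrt_sq_eq_abs]

lemma vecNorm_pos {𝕜 : Type*} [RCLike 𝕜] {n : ℕ} {v : Fin n → 𝕜} (hv : v ≠ 0) :
    0 < vecNorm v := by
  unfold vecNorm
  apply Real.sqrt_pos.2
  have h : ∃ i, v i ≠ 0 := by
    by_contra h
    push_neg at h
    exact hv (funext h)
  obtain ⟨i, hi⟩ := h
  have : (0:ℝ) < ‖v i‖ ^ 2 := pow_pos (norm_pos_iff.mpr hi) 2
  exact lt_of_lt_of_le this (Finset.single_le_sum (f := fun i => ‖v i‖ ^ 2)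
    (fun j _ => by positivity) (Finset.mem_univ i))

lemma frobNorm_smul_real {𝕜 : Type*} [RCLike 𝕜] {p q : ℕ} (r : ℝ)
    (Z : Matrix (Fin p) (Fin q) 𝕜) : frobNorm (r • Z) = |r| * frobNorm Z := by
  unfold frobNorm
  have : ∀ i j, ‖(r • Z) i j‖ ^ 2 = r ^ 2 * ‖Z i j‖ ^ 2 := by
    intro i j
    simp [Matrix.smul_apply, norm_smul, mul_pow, sq_abs]
  have hs : ∑ i, ∑ j, ‖(r • Z) i j‖ ^ 2 = r ^ 2 * ∑ i, ∑ j, ‖Z i j‖ ^ 2 := by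
    rw [Finset.mul_sum]
    exact Finset.sum_congr rfl fun i _ => by
      rw [Finset.mul_sum]; exact Finset.sum_congr rfl fun j _ => this i j
  rw [hs, Real.sqrt_mul (sq_nonneg r), Real.sqrt_sq_eq_abs]

/-- the deterministic construction underlying the instability theorems.
A descent direction `Z` with small `‖𝒜 Z‖ / ‖Z‖_F` yields, for every sufficiently small
noise level `τ`, a feasible alternative solution `X̃` preferred by nuclear norm
minimization but far from `X0`. -/
theorem instability_construction {n1 n2 m : ℕ}
    (A : Matrix (Fin n1) (Fin n2) ℂ →ₗ[ℂ] (Fin m → ℂ))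
    (X0 Z : Matrix (Fin n1) (Fin n2) ℂ) (θ : ℝ) (hθ : 0 < θ)
    (hZdc : Z ∈ descentCone X0) (hZne : Z ≠ 0) (hAZne : A Z ≠ 0)
    (hAZ : vecNorm (A Z) ≤ θ * frobNorm Z)
    (hdesc : ∀ t : ℝ, 0 < t → t ≤ 1 → nuclearNorm (X0 + t • Z) ≤ nuclearNorm X0)
    (τ0 τ t : ℝ) (e : Fin m → ℂ) (y : Fin m → ℂ) (Xt : Matrix (Fin n1) (Fin n2) ℂ)
    (hτ0 : τ0 = vecNorm (A Z) / 2) (hτpos : 0 < τ) (hττ0 : τ ≤ τ0)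
    (hts : t = τ / τ0) (he : e = (t / 2) • A Z) (hy : y = A X0 + e)
    (hXt : Xt = X0 + t • Z) :
    vecNorm e = τ ∧
    vecNorm (A Xt - y) = τ ∧
    nuclearNorm Xt ≤ nuclearNorm X0 ∧
    2 * τ / θ ≤ frobNorm (Xt - X0) := by
  have hAZpos : 0 < vecNorm (A Z) := vecNorm_pos hAZne
  have hτ0pos : 0 < τ0 := by rw [hτ0]; linarith
  have htpos : 0 < t := by rw [hts]; exact div_pos hτpos hτ0pos
  have ht1 : t ≤ 1 := by
    rw [hts]; exact div_le_one_of_le₀ hττ0 hτ0pos.le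
  have htτ : t * τ0 = τ := by
    rw [hts]; field_simp
  have hAZ2 : vecNorm (A Z) = 2 * τ0 := by rw [hτ0]; ring
  have hE : vecNorm e = τ := by
    rw [he, vecNorm_smul_real, abs_of_pos (by linarith : (0:ℝ) < t / 2), hAZ2]
    linarith [htτ]
  refine ⟨hE, ?_, ?_, ?_⟩
  · have hAts : A (t • Z) = t • A Z := A.map_smul_of_tower t Z
    have : A Xt - y = e := by
      rw [hXt, hy, he, map_add, hAts]
      have : (t:ℝ) • A Z - (t / 2) • A Z = (t / 2) • A Z := by
        rw [← sub_smul]; ring_nf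
      simp only [add_sub_add_left_eq_sub]
      rw [this]
    rw [this, hE]
  · rw [hXt]; exact hdesc t htpos ht1
  · have hFZ : vecNorm (A Z) / θ ≤ frobNorm Z := by
      rw [div_le_iff₀ hθ, mul_comm]; exact hAZ
    have : Xt - X0 = t • Z := by rw [hXt]; abel
    rw [this, frobNorm_smul_real, abs_of_pos htpos]
    have h1 : 2 * τ / θ = t * (vecNorm (A Z) / θ) := by
      rw [hAZ2]; field_simp; linarith [htτ]
    rw [h1]
    exact mul_le_mul_of_nonneg_left hFZ htpos.le
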